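/- Let (A, q) be a metric group of exponent n generated by its isotropic elements, and let (B, r) be a pre-metric group. Let B̃ = ⟨ y ∈ B : r(y)^n = 1 ⟩. Then the subgroup A ⊕ B̃ of the orthogonal direct sum (A ⊕ B, q ⊕ r) is generated by its isotropic elements. -/

import Mathlib

/-- The bilinear form associated to a quadratic form `q : A → kˣ`. -/
def Bform {A k : Type*} [AddCommGroup A] [Field k] (q : A → kˣ) (x y : A) : kˣ :=
  q (x + y) * (q x * q y)⁻¹

/-- `q : A → kˣ` is a quadratic form: `q(-x) = q(x)` and its associated form is bilinear. -/
def IsQuadraticForm {A k : Type*} [AddCommGroup A] [Field k] (q : A → kˣ) : Prop :=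
  (∀ x, q (-x) = q x) ∧ ∀ x y z, Bform q (x + y) z = Bform q x z * Bform q y z

/-- Non-degeneracy of the bilinear form associated to `q`. -/
def Nondeg {A k : Type*} [AddCommGroup A] [Field k] (q : A → kˣ) : Prop :=
  ∀ x, (∀ y, Bform q x y = 1) → x = 0

/-
If `x, y` are isotropic then `q (x + t • y) = b(x, y) ^ t`, so it suffices to find isotropic
`x, y` with `b(x, y)` of order exactly `n`. Non-degeneracy and isotropic generation give, for
each prime power `p ^ e ∥ n`, isotropic `x, y` with `b(x, y) ^ (n / p) ≠ 1`; multiplying both by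
`n / p ^ e` yields a pair whose pairing has order `p ^ e` and which is `p ^ e`-torsion for the
form. Pairs attached to distinct primes are orthogonal, so their sums assemble into a pair of
order `n`. With `q` onto the `n`-th roots of unity, `(0, y)` for `r y ^ n = 1` is the difference
of the isotropic `(x, y)` with `q x = (r y)⁻¹` and `(x, 0)`.
-/

section

variable {A k : Type*} [AddCommGroup A] [Field k] {q : A → kˣ}

lemma bform_comm (q : A → kˣ) (x y : A) : Bform q x y = Bform q y x := by
  simp [Bform, add_comm, mul_comm]

lemma map_add_eq_mul_bform (q : A → kˣ) (x y : A) : q (x + y) = q x * q y * Bform q x y := by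
  rw [Bform, mul_comm (q (x + y)), mul_inv_cancel_left]

lemma bform_eq_one_of_coprime {a b : ℕ} {x y : A} (hx : ∀ w, Bform q x w ^ a = 1)
    (hy : ∀ w, Bform q y w ^ b = 1) (hab : a.Coprime b) : Bform q x y = 1 := by
  rw [← orderOf_eq_one_iff]
  refine Nat.eq_one_of_dvd_coprimes hab (orderOf_dvd_of_pow_eq_one (hx y)) ?_
  exact orderOf_dvd_of_pow_eq_one (bform_comm q x y ▸ hy x)

namespace IsQuadraticForm

lemma bform_add_left (hq : IsQuadraticForm q) (x y z : A) :
    Bform q (x + y) z = Bform q x z * Bform q y z :=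
  hq.2 x y z

lemma bform_add_right (hq : IsQuadraticForm q) (x y z : A) :
    Bform q x (y + z) = Bform q x y * Bform q x z := by
  rw [bform_comm, hq.bform_add_left, bform_comm q y, bform_comm q z]

lemma bform_zero_left (hq : IsQuadraticForm q) (z : A) : Bform q 0 z = 1 := by
  simpa using hq.bform_add_left 0 0 z

def bformLeftHom (hq : IsQuadraticForm q) (z : A) : A →+ Additive kˣ where
  toFun x := Additive.ofMul (Bform q x z)
  map_zero' := congrArg Additive.ofMul (hq.bform_zero_left z)
  map_add' x y := congrArg Additive.ofMul (hq.bform_add_left x y z)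

lemma bform_nsmul_left (hq : IsQuadraticForm q) (c : ℕ) (x z : A) :
    Bform q (c • x) z = Bform q x z ^ c :=
  congrArg Additive.toMul (map_nsmul (hq.bformLeftHom z) c x)

lemma bform_neg_left (hq : IsQuadraticForm q) (x z : A) : Bform q (-x) z = (Bform q x z)⁻¹ :=
  congrArg Additive.toMul (map_neg (hq.bformLeftHom z) x)

lemma bform_pow_exponent (hq : IsQuadraticForm q) (x z : A) :
    Bform q x z ^ AddMonoid.exponent A = 1 := by
  rw [← hq.bform_nsmul_left, AddMonoid.exponent_nsmul_eq_zero, hq.bform_zero_left]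

lemma map_zero (hq : IsQuadraticForm q) : q 0 = 1 := by
  simpa [Bform] using hq.bform_zero_left 0

lemma bform_self (hq : IsQuadraticForm q) (x : A) : Bform q x x = q x * q x := by
  have h := map_add_eq_mul_bform q x (-x)
  rw [add_neg_cancel, hq.map_zero, hq.1, bform_comm, hq.bform_neg_left] at h
  exact (mul_inv_eq_one.mp h.symm).symm

lemma map_nsmul_eq_one (hq : IsQuadraticForm q) {x : A} (hx : q x = 1) (c : ℕ) :
    q (c • x) = 1 := by
  induction c with
  | zero => simpa using hq.map_zero
  | succ c ih =>
    rw [succ_nsmul, map_add_eq_mul_bform q, ih, hq.bform_nsmul_left, hq.bform_self, hx]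
    simp

lemma bform_pow_eq_one_of_isotropic (hq : IsQuadraticForm q)
    (hgen : AddSubgroup.closure {x : A | q x = 1} = ⊤) {d : ℕ} {z : A}
    (h : ∀ x, q x = 1 → Bform q x z ^ d = 1) (x : A) : Bform q x z ^ d = 1 := by
  induction (hgen ▸ AddSubgroup.mem_top x : x ∈ AddSubgroup.closure {x : A | q x = 1})
    using AddSubgroup.closure_induction with
  | mem x hx => exact h x hx
  | zero => rw [hq.bform_zero_left, one_pow]
  | add x y _ _ hx hy => rw [hq.bform_add_left, mul_pow, hx, hy, one_mul]
  | neg x _ hx => rw [hq.bform_neg_left, inv_pow, hx, inv_one]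

lemma exists_isotropic_bform_pow_ne_one (hq : IsQuadraticForm q) (hnd : Nondeg q)
    (hgen : AddSubgroup.closure {x : A | q x = 1} = ⊤) {d : ℕ}
    (hd : ¬ AddMonoid.exponent A ∣ d) :
    ∃ x y, q x = 1 ∧ q y = 1 ∧ Bform q x y ^ d ≠ 1 := by
  by_contra! h
  have hy (x : A) {y : A} (hy : q y = 1) : Bform q x y ^ d = 1 :=
    hq.bform_pow_eq_one_of_isotropic hgen (fun x hx => h x y hx hy) x
  refine hd (AddMonoid.exponent_dvd_of_forall_nsmul_eq_zero fun x => hnd _ fun y => ?_)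
  rw [hq.bform_nsmul_left, bform_comm]
  exact hq.bform_pow_eq_one_of_isotropic hgen (fun y hy' => bform_comm q x y ▸ hy x hy') y

end IsQuadraticForm

structure IsIsotropicPair (q : A → kˣ) (m : ℕ) (x y : A) : Prop where
  isotropic_left : q x = 1
  isotropic_right : q y = 1
  bform_left_pow : ∀ w, Bform q x w ^ m = 1
  bform_right_pow : ∀ w, Bform q y w ^ m = 1
  orderOf_bform : orderOf (Bform q x y) = m

namespace IsIsotropicPair

lemma zero (hq : IsQuadraticForm q) : IsIsotropicPair q 1 0 0 where
  isotropic_left := hq.map_zero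
  isotropic_right := hq.map_zero
  bform_left_pow w := by rw [hq.bform_zero_left, one_pow]
  bform_right_pow w := by rw [hq.bform_zero_left, one_pow]
  orderOf_bform := by rw [hq.bform_zero_left, orderOf_one]

lemma add (hq : IsQuadraticForm q) {a b : ℕ} {x₁ y₁ x₂ y₂ : A}
    (h₁ : IsIsotropicPair q a x₁ y₁) (h₂ : IsIsotropicPair q b x₂ y₂) (hab : a.Coprime b) :
    IsIsotropicPair q (a * b) (x₁ + x₂) (y₁ + y₂) := by
  obtain ⟨hqx₁, hqy₁, hx₁, hy₁, hord₁⟩ := h₁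
  obtain ⟨hqx₂, hqy₂, hx₂, hy₂, hord₂⟩ := h₂
  have hpow {u v : A} (hu : ∀ w, Bform q u w ^ a = 1) (hv : ∀ w, Bform q v w ^ b = 1) (w : A) :
      Bform q (u + v) w ^ (a * b) = 1 := by
    rw [hq.bform_add_left, mul_pow, pow_mul, hu, one_pow, one_mul, mul_comm, pow_mul, hv, one_pow]
  refine ⟨?_, ?_, hpow hx₁ hx₂, hpow hy₁ hy₂, ?_⟩
  · rw [map_add_eq_mul_bform q, hqx₁, hqx₂, bform_eq_one_of_coprime hx₁ hx₂ hab, one_mul,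
      one_mul]
  · rw [map_add_eq_mul_bform q, hqy₁, hqy₂, bform_eq_one_of_coprime hy₁ hy₂ hab, one_mul,
      one_mul]
  · rw [hq.bform_add_left, hq.bform_add_right, hq.bform_add_right,
      bform_eq_one_of_coprime hx₁ hy₂ hab, bform_eq_one_of_coprime hx₂ hy₁ hab.symm, mul_one,
      one_mul, (Commute.all _ _).orderOf_mul_eq_mul_orderOf_of_coprime (hord₁ ▸ hord₂ ▸ hab),
      hord₁, hord₂]

end IsIsotropicPair

namespace IsQuadraticForm

variable [Finite A]

lemma exists_isIsotropicPair_ordProj (hq : IsQuadraticForm q)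
    (hnd : Nondeg q) (hgen : AddSubgroup.closure {x : A | q x = 1} = ⊤) {p : ℕ} (hp : p.Prime)
    (hpn : p ∣ AddMonoid.exponent A) :
    ∃ x y, IsIsotropicPair q (p ^ (AddMonoid.exponent A).factorization p) x y := by
  set n := AddMonoid.exponent A
  have hn0 : n ≠ 0 := AddMonoid.exponent_ne_zero_of_finite
  obtain ⟨e, he⟩ : ∃ e, n.factorization p = e + 1 :=
    Nat.exists_eq_succ_of_ne_zero (hp.factorization_pos_of_dvd hn0 hpn).ne'
  set c := n / p ^ n.factorization p
  have hn : p ^ (e + 1) * c = n := he ▸ Nat.ordProj_mul_ordCompl_eq_self n p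
  have hcop : (p ^ (e + 1)).Coprime c := he ▸ (Nat.coprime_ordCompl hp hn0).pow_left _
  have hc0 : c ≠ 0 := by rintro hc; rw [hc, mul_zero] at hn; exact hn0 hn.symm
  -- `c * p ^ e = n / p`
  have hd : ¬ n ∣ c * p ^ e := by
    have hpos : 0 < c * p ^ e := Nat.pos_of_ne_zero (mul_ne_zero hc0 (pow_ne_zero e hp.ne_zero))
    refine Nat.not_dvd_of_pos_of_lt hpos ?_
    rw [← hn, pow_succ]
    nlinarith [hp.two_le]
  obtain ⟨x, y, hx, hy, hxy⟩ := hq.exists_isotropic_bform_pow_ne_one hnd hgen hd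
  have : Fact p.Prime := ⟨hp⟩
  have hg : orderOf (Bform q x y ^ c) = p ^ (e + 1) := by
    refine orderOf_eq_prime_pow (by rwa [← pow_mul]) ?_
    rw [← pow_mul, mul_comm, hn]
    exact hq.bform_pow_exponent x y
  have htorsion (u w : A) : Bform q (c • u) w ^ p ^ (e + 1) = 1 := by
    rw [hq.bform_nsmul_left, ← pow_mul, mul_comm, hn, hq.bform_pow_exponent]
  rw [he]
  refine ⟨c • x, c • y, hq.map_nsmul_eq_one hx c, hq.map_nsmul_eq_one hy c, htorsion x,
    htorsion y, ?_⟩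
  rw [hq.bform_nsmul_left, bform_comm, hq.bform_nsmul_left, bform_comm,
    Nat.Coprime.orderOf_pow (hg ▸ hcop), hg]

lemma exists_isIsotropicPair_exponent (hq : IsQuadraticForm q)
    (hnd : Nondeg q) (hgen : AddSubgroup.closure {x : A | q x = 1} = ⊤) :
    ∃ x y, IsIsotropicPair q (AddMonoid.exponent A) x y := by
  set n := AddMonoid.exponent A
  have hprod (s : Finset ℕ) (hs : s ⊆ n.primeFactors) :
      ∃ x y, IsIsotropicPair q (∏ p ∈ s, p ^ n.factorization p) x y := by
    induction s using Finset.induction_on with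
    | empty => exact ⟨0, 0, IsIsotropicPair.zero hq⟩
    | insert p s hps ih =>
      have hp := Nat.prime_of_mem_primeFactors (hs (Finset.mem_insert_self p s))
      obtain ⟨x₁, y₁, h₁⟩ := hq.exists_isIsotropicPair_ordProj hnd hgen hp
        (Nat.dvd_of_mem_primeFactors (hs (Finset.mem_insert_self p s)))
      obtain ⟨x₂, y₂, h₂⟩ := ih ((Finset.subset_insert p s).trans hs)
      rw [Finset.prod_insert hps]
      refine ⟨x₁ + x₂, y₁ + y₂, h₁.add hq h₂ ?_⟩
      refine Nat.Coprime.prod_right fun l hl => Nat.coprime_pow_primes _ _ hp ?_ ?_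
      · exact Nat.prime_of_mem_primeFactors (hs (Finset.mem_insert_of_mem hl))
      · rintro rfl; exact hps hl
  obtain ⟨x, y, h⟩ := hprod n.primeFactors subset_rfl
  rw [← Nat.prod_primeFactors_pow_factorization AddMonoid.exponent_ne_zero_of_finite] at h
  exact ⟨x, y, h⟩

lemma exists_eq_of_pow_exponent_eq_one (hq : IsQuadraticForm q) (hnd : Nondeg q)
    (hgen : AddSubgroup.closure {x : A | q x = 1} = ⊤) {ζ : kˣ}
    (hζ : ζ ^ AddMonoid.exponent A = 1) : ∃ x, q x = ζ := by
  obtain ⟨x, y, h⟩ := hq.exists_isIsotropicPair_exponent hnd hgen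
  have : NeZero (AddMonoid.exponent A) := ⟨AddMonoid.exponent_ne_zero_of_finite⟩
  have hprim : IsPrimitiveRoot (Bform q x y) (AddMonoid.exponent A) :=
    h.orderOf_bform ▸ IsPrimitiveRoot.orderOf _
  obtain ⟨t, -, ht⟩ := hprim.eq_pow_of_mem_rootsOfUnity hζ
  refine ⟨x + t • y, ?_⟩
  rw [map_add_eq_mul_bform q, h.isotropic_left, hq.map_nsmul_eq_one h.isotropic_right,
    bform_comm, hq.bform_nsmul_left, bform_comm, one_mul, one_mul, ht]

end IsQuadraticForm

end

theorem stmt9_general {k : Type*} [Field k]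
    {A B : Type*} [AddCommGroup A] [Finite A] [AddCommGroup B]
    (q : A → kˣ) (r : B → kˣ)
    (hq : IsQuadraticForm q) (hnd : Nondeg q) (hr : IsQuadraticForm r)
    (n : ℕ) (hn : AddMonoid.exponent A = n)
    (hgen : AddSubgroup.closure {x : A | q x = 1} = ⊤) :
    AddSubgroup.closure
        {v : A × B |
          v ∈ (⊤ : AddSubgroup A).prod (AddSubgroup.closure {y : B | r y ^ n = 1}) ∧
            q v.1 * r v.2 = 1} =
      (⊤ : AddSubgroup A).prod (AddSubgroup.closure {y : B | r y ^ n = 1}) := by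
  subst hn
  set G := (⊤ : AddSubgroup A).prod (AddSubgroup.closure {y : B | r y ^ AddMonoid.exponent A = 1})
  set S := {v : A × B | v ∈ G ∧ q v.1 * r v.2 = 1}
  refine le_antisymm ((AddSubgroup.closure_le _).mpr fun v hv => hv.1) ?_
  have hinl : AddSubgroup.map (AddMonoidHom.inl A B) ⊤ ≤ AddSubgroup.closure S := by
    rw [← hgen, AddSubgroup.map_le_iff_le_comap, AddSubgroup.closure_le]
    intro x hx
    refine AddSubgroup.subset_closure ⟨AddSubgroup.mem_prod.mpr ⟨trivial, zero_mem _⟩, ?_⟩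
    rw [AddMonoidHom.inl_apply, hx, hr.map_zero, one_mul]
  refine AddSubgroup.prod_le_iff.mpr ⟨hinl, ?_⟩
  rw [AddSubgroup.map_le_iff_le_comap, AddSubgroup.closure_le]
  intro y hy
  obtain ⟨x, hx⟩ := hq.exists_eq_of_pow_exponent_eq_one hnd hgen (ζ := (r y)⁻¹)
    (by rw [inv_pow, hy, inv_one])
  have hxy : (x, y) ∈ AddSubgroup.closure S := AddSubgroup.subset_closure
    ⟨AddSubgroup.mem_prod.mpr ⟨trivial, AddSubgroup.subset_closure hy⟩, by rw [hx, inv_mul_cancel]⟩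
  simpa using sub_mem hxy (hinl ⟨x, trivial, rfl⟩)

/-- If `(A, q)` is an isotropically generated metric group of exponent `n` and `(B, r)`
a pre-metric group with `B̃ = ⟨ y : r(y)^n = 1 ⟩`, then the subgroup `A ⊕ B̃` of the
orthogonal sum `(A ⊕ B, q ⊕ r)` is generated by its isotropic elements. -/
theorem stmt9 {k : Type*} [Field k] [CharZero k] [IsAlgClosed k]
    {A B : Type*} [AddCommGroup A] [Finite A] [AddCommGroup B] [Finite B]
    (q : A → kˣ) (r : B → kˣ)
    (hq : IsQuadraticForm q) (hnd : Nondeg q) (hr : IsQuadraticForm r)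
    (n : ℕ) (hn : AddMonoid.exponent A = n)
    (hgen : AddSubgroup.closure {x : A | q x = 1} = ⊤) :
    AddSubgroup.closure
        {v : A × B |
          v ∈ (⊤ : AddSubgroup A).prod (AddSubgroup.closure {y : B | r y ^ n = 1}) ∧
            q v.1 * r v.2 = 1} =
      (⊤ : AddSubgroup A).prod (AddSubgroup.closure {y : B | r y ^ n = 1}) :=
  stmt9_general q r hq hnd hr n hn hgen
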